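/- The ring map ℂ[a,b,c,d]/(ad - bc) → ℂ[v₁,v₂,w₁,w₂] induced by a ↦ v₁w₁, b ↦ v₁w₂, c ↦ v₂w₁, d ↦ v₂w₂ is injective, and its image equals the subring of elements invariant under the automorphisms v ↦ λv, w ↦ λ⁻¹w for all λ ∈ ℂˣ. -/
import Mathlib


open MvPolynomial

/-- The substitution `a ↦ v₁w₁, b ↦ v₁w₂, c ↦ v₂w₁, d ↦ v₂w₂`, where the
source variables `a,b,c,d` are `X 0, X 1, X 2, X 3` and the target variables
`v₁,v₂,w₁,w₂` are `X 0, X 1, X 2, X 3`. -/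
noncomputable def coneParam : MvPolynomial (Fin 4) ℂ →ₐ[ℂ] MvPolynomial (Fin 4) ℂ :=
  aeval ![X 0 * X 2, X 0 * X 3, X 1 * X 2, X 1 * X 3]

/-- The automorphism `v ↦ λ v`, `w ↦ λ⁻¹ w` of `ℂ[v₁,v₂,w₁,w₂]`. -/
noncomputable def coneScaling (l : ℂˣ) : MvPolynomial (Fin 4) ℂ →ₐ[ℂ] MvPolynomial (Fin 4) ℂ :=
  aeval ![C (l : ℂ) * X 0, C (l : ℂ) * X 1, C ((l⁻¹ : ℂˣ) : ℂ) * X 2, C ((l⁻¹ : ℂˣ) : ℂ) * X 3]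

noncomputable def mk4 (i j k l : ℕ) : Fin 4 →₀ ℕ :=
  Finsupp.single 0 i + Finsupp.single 1 j + Finsupp.single 2 k + Finsupp.single 3 l

lemma mk4_apply (i j k l : ℕ) :
    mk4 i j k l 0 = i ∧ mk4 i j k l 1 = j ∧ mk4 i j k l 2 = k ∧ mk4 i j k l 3 = l := by
  refine ⟨?_, ?_, ?_, ?_⟩ <;> simp [mk4, Finsupp.single_apply]

lemma monomial_mk4 (i j k l : ℕ) (c : ℂ) :
    monomial (mk4 i j k l) c = C c * X 0 ^ i * X 1 ^ j * X 2 ^ k * X 3 ^ l := by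
  rw [mk4, X_pow_eq_monomial, X_pow_eq_monomial, X_pow_eq_monomial, X_pow_eq_monomial, C_apply,
    monomial_mul, monomial_mul, monomial_mul, monomial_mul]
  simp

lemma eq_mk4 (m : Fin 4 →₀ ℕ) : m = mk4 (m 0) (m 1) (m 2) (m 3) := by
  ext i
  fin_cases i <;> simp [mk4, Finsupp.single_apply]

lemma monomial_eq4 (m : Fin 4 →₀ ℕ) (c : ℂ) :
    monomial m c = C c * X 0 ^ m 0 * X 1 ^ m 1 * X 2 ^ m 2 * X 3 ^ m 3 := by
  conv_lhs => rw [eq_mk4 m, monomial_mk4]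

noncomputable def Em (m : Fin 4 →₀ ℕ) : Fin 4 →₀ ℕ :=
  mk4 (m 0 + m 1) (m 2 + m 3) (m 0 + m 2) (m 1 + m 3)

lemma coneParam_monomial (m : Fin 4 →₀ ℕ) (c : ℂ) :
    coneParam (monomial m c) = monomial (Em m) c := by
  rw [coneParam, aeval_monomial, Finsupp.prod_fintype _ _ (fun i => pow_zero _), Fin.prod_univ_four,
    Em, monomial_mk4]
  simp only [Matrix.cons_val_zero, Matrix.cons_val_one, Matrix.head_cons,
    Matrix.cons_val_two, Matrix.cons_val_three, Matrix.tail_cons, algebraMap_eq]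
  ring

lemma coneScaling_monomial (l : ℂˣ) (m : Fin 4 →₀ ℕ) (c : ℂ) :
    coneScaling l (monomial m c) =
      monomial m (c * (l : ℂ) ^ (m 0 + m 1) * ((l⁻¹ : ℂˣ) : ℂ) ^ (m 2 + m 3)) := by
  rw [coneScaling, aeval_monomial, Finsupp.prod_fintype _ _ (fun i => pow_zero _), Fin.prod_univ_four]
  simp only [Matrix.cons_val_zero, Matrix.cons_val_one, Matrix.head_cons,
    Matrix.cons_val_two, Matrix.cons_val_three, Matrix.tail_cons, algebraMap_eq]
  rw [monomial_eq4]
  simp only [mul_pow, ← C_pow, pow_add, C_mul]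
  ring

noncomputable def fdet : MvPolynomial (Fin 4) ℂ := X 0 * X 3 - X 1 * X 2

lemma coneParam_fdet : coneParam fdet = 0 := by
  simp only [fdet, map_sub, map_mul, coneParam, aeval_X, Matrix.cons_val_zero, Matrix.cons_val_one,
    Matrix.head_cons, Matrix.cons_val_two, Matrix.cons_val_three, Matrix.tail_cons]
  ring

lemma Em_apply (m : Fin 4 →₀ ℕ) :
    Em m 0 = m 0 + m 1 ∧ Em m 1 = m 2 + m 3 ∧ Em m 2 = m 0 + m 2 ∧ Em m 3 = m 1 + m 3 := by
  refine ⟨?_, ?_, ?_, ?_⟩ <;> simp [Em, mk4, Finsupp.single_apply]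

noncomputable def rho (m : Fin 4 →₀ ℕ) : Fin 4 →₀ ℕ :=
  mk4 (m 0 - min (m 0) (m 3)) (m 1 + min (m 0) (m 3)) (m 2 + min (m 0) (m 3))
    (m 3 - min (m 0) (m 3))

lemma rho_eq_of_Em_eq {m m' : Fin 4 →₀ ℕ} (h : Em m = Em m') : rho m = rho m' := by
  have h0 := congrArg (fun g : Fin 4 →₀ ℕ => g 0) h
  have h1 := congrArg (fun g : Fin 4 →₀ ℕ => g 1) h
  have h2 := congrArg (fun g : Fin 4 →₀ ℕ => g 2) h
  simp only [(Em_apply _).1, (Em_apply _).2.1, (Em_apply _).2.2.1] at h0 h1 h2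
  have e0 : m 0 - min (m 0) (m 3) = m' 0 - min (m' 0) (m' 3) := by omega
  have e1 : m 1 + min (m 0) (m 3) = m' 1 + min (m' 0) (m' 3) := by omega
  have e2 : m 2 + min (m 0) (m 3) = m' 2 + min (m' 0) (m' 3) := by omega
  have e3 : m 3 - min (m 0) (m 3) = m' 3 - min (m' 0) (m' 3) := by omega
  rw [rho, rho, e0, e1, e2, e3]

lemma Em_rho (m : Fin 4 →₀ ℕ) : Em (rho m) = Em m := by
  have h := mk4_apply (m 0 - min (m 0) (m 3)) (m 1 + min (m 0) (m 3)) (m 2 + min (m 0) (m 3))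
    (m 3 - min (m 0) (m 3))
  rw [Em, Em, rho, h.1, h.2.1, h.2.2.1, h.2.2.2]
  have e0 : m 0 - min (m 0) (m 3) + (m 1 + min (m 0) (m 3)) = m 0 + m 1 := by omega
  have e1 : m 2 + min (m 0) (m 3) + (m 3 - min (m 0) (m 3)) = m 2 + m 3 := by omega
  have e2 : m 0 - min (m 0) (m 3) + (m 2 + min (m 0) (m 3)) = m 0 + m 2 := by omega
  have e3 : m 1 + min (m 0) (m 3) + (m 3 - min (m 0) (m 3)) = m 1 + m 3 := by omega
  rw [e0, e1, e2, e3]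

lemma step_mem (i j k l : ℕ) (c : ℂ) :
    monomial (mk4 (i+1) j k (l+1)) c - monomial (mk4 i (j+1) (k+1) l) c ∈ Ideal.span {fdet} := by
  have h : monomial (mk4 (i+1) j k (l+1)) c - monomial (mk4 i (j+1) (k+1) l) c
      = monomial (mk4 i j k l) c * fdet := by
    rw [monomial_mk4, monomial_mk4, monomial_mk4, fdet]
    ring
  rw [h]
  exact Ideal.mem_span_singleton.mpr (Dvd.intro_left _ rfl)

lemma telescope_mem (t : ℕ) : ∀ i j k l : ℕ, ∀ c : ℂ, t ≤ i → t ≤ l →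
    monomial (mk4 i j k l) c - monomial (mk4 (i - t) (j + t) (k + t) (l - t)) c
      ∈ Ideal.span {fdet} := by
  induction t with
  | zero => intro i j k l c _ _; simp
  | succ t ih =>
    intro i j k l c hi hl
    obtain ⟨i, rfl⟩ : ∃ i', i = i' + 1 := ⟨i - 1, by omega⟩
    obtain ⟨l, rfl⟩ : ∃ l', l = l' + 1 := ⟨l - 1, by omega⟩
    have h1 := step_mem i j k l c
    have h2 := ih i (j+1) (k+1) l c (by omega) (by omega)
    have e0 : i + 1 - (t+1) = i - t := by omega
    have e1 : j + (t+1) = j + 1 + t := by omega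
    have e2 : k + (t+1) = k + 1 + t := by omega
    have e3 : l + 1 - (t+1) = l - t := by omega
    rw [e0, e1, e2, e3]
    have h3 := Ideal.add_mem _ h1 h2
    convert h3 using 1
    ring

lemma sub_rho_mem (m : Fin 4 →₀ ℕ) (c : ℂ) :
    monomial m c - monomial (rho m) c ∈ Ideal.span {fdet} := by
  have h := telescope_mem (min (m 0) (m 3)) (m 0) (m 1) (m 2) (m 3) c
    (min_le_left _ _) (min_le_right _ _)
  rw [← eq_mk4 m] at h
  exact h

lemma coneParam_eq_sum (p : MvPolynomial (Fin 4) ℂ) :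
    coneParam p = ∑ m ∈ p.support, monomial (Em m) (coeff m p) := by
  conv_lhs => rw [p.as_sum]
  rw [map_sum]
  exact Finset.sum_congr rfl fun m _ => coneParam_monomial m _

lemma coeff_coneParam (p : MvPolynomial (Fin 4) ℂ) (n : Fin 4 →₀ ℕ) :
    coeff n (coneParam p) = ∑ m ∈ p.support, if Em m = n then coeff m p else 0 := by
  rw [coneParam_eq_sum, coeff_sum]
  exact Finset.sum_congr rfl fun m _ => coeff_monomial _ _ _

lemma ker_sub (p : MvPolynomial (Fin 4) ℂ) (hp : coneParam p = 0) : p ∈ Ideal.span {fdet} := by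
  set N : MvPolynomial (Fin 4) ℂ := ∑ m ∈ p.support, monomial (rho m) (coeff m p) with hN
  have h1 : p - N ∈ Ideal.span {fdet} := by
    have e : p - N = ∑ m ∈ p.support,
        (monomial m (coeff m p) - monomial (rho m) (coeff m p)) := by
      rw [Finset.sum_sub_distrib, ← p.as_sum, hN]
    rw [e]
    exact Ideal.sum_mem _ fun m _ => sub_rho_mem m _
  have h2 : N = 0 := by
    apply MvPolynomial.ext
    intro n
    rw [coeff_zero, hN, coeff_sum]
    have hterm : ∀ m, coeff n (monomial (rho m) (coeff m p)) =
        if rho m = n then coeff m p else 0 := fun m => coeff_monomial _ _ _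
    simp_rw [hterm]
    by_cases hex : ∃ m₀ ∈ p.support, rho m₀ = n
    · obtain ⟨m₀, hm₀, hr⟩ := hex
      have key : ∀ m, (rho m = n) ↔ (Em m = Em m₀) := by
        intro m
        constructor
        · intro h
          rw [← Em_rho m, ← Em_rho m₀, h, hr]
        · intro h
          rw [rho_eq_of_Em_eq h, hr]
      have e2 : ∀ m ∈ p.support, (if rho m = n then coeff m p else 0)
          = (if Em m = Em m₀ then coeff m p else 0) :=
        fun m _ => if_congr (key m) rfl rfl
      rw [Finset.sum_congr rfl e2, ← coeff_coneParam p (Em m₀), hp, coeff_zero]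
    · push_neg at hex
      exact Finset.sum_eq_zero fun m hm => if_neg (hex m hm)
  rw [h2, sub_zero] at h1
  exact h1

lemma coneScaling_coneParam (l : ℂˣ) (p : MvPolynomial (Fin 4) ℂ) :
    coneScaling l (coneParam p) = coneParam p := by
  have h : (coneScaling l).comp coneParam = coneParam := by
    apply MvPolynomial.algHom_ext
    intro i
    fin_cases i <;>
      simp [coneParam, coneScaling, Matrix.cons_val_two, Matrix.cons_val_three] <;>
      rw [mul_mul_mul_comm, ← C_mul, mul_inv_cancel₀ (Units.ne_zero l), C_1, one_mul]
  exact DFunLike.congr_fun h p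

lemma coneScaling_eq_sum (l : ℂˣ) (q : MvPolynomial (Fin 4) ℂ) :
    coneScaling l q = ∑ m ∈ q.support,
      monomial m (coeff m q * (l : ℂ) ^ (m 0 + m 1) * ((l⁻¹ : ℂˣ) : ℂ) ^ (m 2 + m 3)) := by
  conv_lhs => rw [q.as_sum]
  rw [map_sum]
  exact Finset.sum_congr rfl fun m _ => coneScaling_monomial l m _

lemma coeff_coneScaling (l : ℂˣ) (q : MvPolynomial (Fin 4) ℂ) (m : Fin 4 →₀ ℕ)
    (hm : m ∈ q.support) :
    coeff m (coneScaling l q) =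
      coeff m q * (l : ℂ) ^ (m 0 + m 1) * ((l⁻¹ : ℂˣ) : ℂ) ^ (m 2 + m 3) := by
  rw [coneScaling_eq_sum, coeff_sum]
  simp_rw [coeff_monomial]
  rw [Finset.sum_ite_eq' q.support m, if_pos hm]

lemma balanced_of_invariant {q : MvPolynomial (Fin 4) ℂ} (hq : ∀ l : ℂˣ, coneScaling l q = q) :
    ∀ m ∈ q.support, m 0 + m 1 = m 2 + m 3 := by
  intro m hm
  set l : ℂˣ := Units.mk0 (2 : ℂ) two_ne_zero with hl
  have h := congrArg (coeff m) (hq l)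
  rw [coeff_coneScaling l q m hm] at h
  have hc : coeff m q ≠ 0 := mem_support_iff.mp hm
  have h2 : (l : ℂ) ^ (m 0 + m 1) * ((l⁻¹ : ℂˣ) : ℂ) ^ (m 2 + m 3) = 1 := by
    have h' : coeff m q * ((l : ℂ) ^ (m 0 + m 1) * ((l⁻¹ : ℂˣ) : ℂ) ^ (m 2 + m 3))
        = coeff m q * 1 := by rw [mul_one, ← mul_assoc]; exact h
    exact mul_left_cancel₀ hc h'
  have h3 : (2 : ℂ) ^ (m 0 + m 1) * ((2 : ℂ) ^ (m 2 + m 3))⁻¹ = 1 := by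
    rw [← inv_pow]
    simpa [hl, Units.val_inv_eq_inv_val] using h2
  have h4 : (2 : ℂ) ^ (m 0 + m 1) = (2 : ℂ) ^ (m 2 + m 3) :=
    (mul_inv_eq_one₀ (pow_ne_zero _ two_ne_zero)).mp h3
  have h5 : (2 : ℕ) ^ (m 0 + m 1) = (2 : ℕ) ^ (m 2 + m 3) := by
    have := h4
    exact_mod_cast this
  exact Nat.pow_right_injective (le_refl 2) h5

lemma coneParam_X_vals :
    coneParam (X 0) = X 0 * X 2 ∧ coneParam (X 1) = X 0 * X 3 ∧
      coneParam (X 2) = X 1 * X 2 ∧ coneParam (X 3) = X 1 * X 3 := by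
  refine ⟨?_, ?_, ?_, ?_⟩ <;>
    simp [coneParam, Matrix.cons_val_two, Matrix.cons_val_three]

lemma balanced_monomial_mem (n : ℕ) : ∀ i j k l : ℕ, ∀ c : ℂ, i + j = n → k + l = n →
    ∃ p, coneParam p = monomial (mk4 i j k l) c := by
  induction n with
  | zero =>
    intro i j k l c hij hkl
    obtain rfl : i = 0 := by omega
    obtain rfl : j = 0 := by omega
    obtain rfl : k = 0 := by omega
    obtain rfl : l = 0 := by omega
    refine ⟨C c, ?_⟩
    rw [monomial_mk4]
    simp [coneParam]
  | succ n ih =>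
    intro i j k l c hij hkl
    rcases Nat.eq_zero_or_pos i with hi | hi
    · subst hi
      rcases Nat.eq_zero_or_pos k with hk | hk
      · subst hk
        obtain ⟨j', rfl⟩ : ∃ j', j = j' + 1 := ⟨j - 1, by omega⟩
        obtain ⟨l', rfl⟩ : ∃ l', l = l' + 1 := ⟨l - 1, by omega⟩
        obtain ⟨p, hp⟩ := ih 0 j' 0 l' c (by omega) (by omega)
        refine ⟨p * X 3, ?_⟩
        rw [map_mul, hp, coneParam_X_vals.2.2.2, monomial_mk4, monomial_mk4]
        ring
      · obtain ⟨j', rfl⟩ : ∃ j', j = j' + 1 := ⟨j - 1, by omega⟩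
        obtain ⟨k', rfl⟩ : ∃ k', k = k' + 1 := ⟨k - 1, by omega⟩
        obtain ⟨p, hp⟩ := ih 0 j' k' l c (by omega) (by omega)
        refine ⟨p * X 2, ?_⟩
        rw [map_mul, hp, coneParam_X_vals.2.2.1, monomial_mk4, monomial_mk4]
        ring
    · obtain ⟨i', rfl⟩ : ∃ i', i = i' + 1 := ⟨i - 1, by omega⟩
      rcases Nat.eq_zero_or_pos k with hk | hk
      · subst hk
        obtain ⟨l', rfl⟩ : ∃ l', l = l' + 1 := ⟨l - 1, by omega⟩
        obtain ⟨p, hp⟩ := ih i' j 0 l' c (by omega) (by omega)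
        refine ⟨p * X 1, ?_⟩
        rw [map_mul, hp, coneParam_X_vals.2.1, monomial_mk4, monomial_mk4]
        ring
      · obtain ⟨k', rfl⟩ : ∃ k', k = k' + 1 := ⟨k - 1, by omega⟩
        obtain ⟨p, hp⟩ := ih i' j k' l c (by omega) (by omega)
        refine ⟨p * X 0, ?_⟩
        rw [map_mul, hp, coneParam_X_vals.1, monomial_mk4, monomial_mk4]
        ring

lemma invariant_mem_range {q : MvPolynomial (Fin 4) ℂ} (hq : ∀ l : ℂˣ, coneScaling l q = q) :
    ∃ p, coneParam p = q := by
  have hbal := balanced_of_invariant hq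
  have hmem : ∀ m ∈ q.support, ∃ p, coneParam p = monomial m (coeff m q) := by
    intro m hm
    obtain ⟨p, hp⟩ := balanced_monomial_mem (m 0 + m 1) (m 0) (m 1) (m 2) (m 3) (coeff m q) rfl
      (hbal m hm).symm
    rw [← eq_mk4 m] at hp
    exact ⟨p, hp⟩
  choose f hf using hmem
  refine ⟨∑ m ∈ q.support.attach, f m m.2, ?_⟩
  rw [map_sum]
  conv_rhs => rw [q.as_sum]
  rw [← Finset.sum_attach q.support (fun m => monomial m (coeff m q))]
  exact Finset.sum_congr rfl fun m _ => hf m m.2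

/-- the ring map `ℂ[a,b,c,d]/(ad - bc) → ℂ[v₁,v₂,w₁,w₂]` induced
by `a ↦ v₁w₁, b ↦ v₁w₂, c ↦ v₂w₁, d ↦ v₂w₂` exists and is injective, and its
image is exactly the subring of elements invariant under all the scaling
automorphisms `v ↦ λ v`, `w ↦ λ⁻¹ w`, `λ ∈ ℂˣ`. -/
theorem stmt_7 :
    (∃ ψ : (MvPolynomial (Fin 4) ℂ ⧸ Ideal.span {(X 0 * X 3 - X 1 * X 2 : MvPolynomial (Fin 4) ℂ)})
        →+* MvPolynomial (Fin 4) ℂ,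
      ∀ p, ψ (Ideal.Quotient.mk _ p) = coneParam p) ∧
    (∀ ψ : (MvPolynomial (Fin 4) ℂ ⧸ Ideal.span {(X 0 * X 3 - X 1 * X 2 : MvPolynomial (Fin 4) ℂ)})
        →+* MvPolynomial (Fin 4) ℂ,
      (∀ p, ψ (Ideal.Quotient.mk _ p) = coneParam p) →
      Function.Injective ψ ∧
        Set.range ψ = {q : MvPolynomial (Fin 4) ℂ | ∀ l : ℂˣ, coneScaling l q = q}) := by
  constructor
  · refine ⟨Ideal.Quotient.lift _ (coneParam :
      MvPolynomial (Fin 4) ℂ →ₐ[ℂ] MvPolynomial (Fin 4) ℂ).toRingHom ?_, ?_⟩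
    · intro a ha
      rw [Ideal.mem_span_singleton] at ha
      obtain ⟨c, rfl⟩ := ha
      show coneParam (fdet * c) = 0
      rw [map_mul, coneParam_fdet, zero_mul]
    · intro p
      exact Ideal.Quotient.lift_mk _ _ _
  · intro ψ hψ
    constructor
    · intro x y hxy
      obtain ⟨p, rfl⟩ := Ideal.Quotient.mk_surjective x
      obtain ⟨q, rfl⟩ := Ideal.Quotient.mk_surjective y
      rw [hψ, hψ] at hxy
      rw [Ideal.Quotient.eq]
      exact ker_sub _ (by rw [map_sub, hxy, sub_self])
    · ext q
      simp only [Set.mem_range, Set.mem_setOf_eq]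
      constructor
      · rintro ⟨x, rfl⟩ l
        obtain ⟨p, rfl⟩ := Ideal.Quotient.mk_surjective x
        rw [hψ]
        exact coneScaling_coneParam l p
      · intro hq
        obtain ⟨p, hp⟩ := invariant_mem_range hq
        exact ⟨Ideal.Quotient.mk _ p, by rw [hψ, hp]⟩
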